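/- arXiv:2212.12260 — 7 statements merged into one kernel-verified Lean document; each statement's English description precedes it below -/
import Mathlib

section
/- Let M be a weight sequence and let ρ, R ≥ 1 be real numbers. Then for all j, k, l ∈ ℕ: ρ^j · M_{k+l} · R^l ≤ ρ^{j+l} · M_k + M_{j+k+l} · R^{j+l}. -/
/-!
Write `μ = M (k + l + 1) / M (k + l)`. Since the ratios `M (n + 1) / M n` increase, the `l` ratios
leading from `M k` to `M (k + l)` are at most `μ` and the `j` ratios leading from `M (k + l)` to
`M (j + k + l)` are at least `μ`. Hence `M (k + l) * R ^ l ≤ M k * (μ * R) ^ l` and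
`M (k + l) * (μ * R) ^ j ≤ M (j + k + l) * R ^ j`. Comparing `μ * R` with `ρ`, the left-hand side
is bounded by the first summand when `μ * R ≤ ρ` and by the second when `ρ ≤ μ * R`.
-/

section MonotoneRatio

variable {M : ℕ → ℝ} (hpos : ∀ k, 0 < M k) (hmono : Monotone fun k => M (k + 1) / M k)
include hpos hmono

theorem mul_ratio_pow_le_add (m j : ℕ) : M m * (M (m + 1) / M m) ^ j ≤ M (m + j) := by
  induction j with
  | zero => simp
  | succ j ih =>
    have hratio : M (m + 1) / M m ≤ M (m + j + 1) / M (m + j) := hmono (Nat.le_add_right m j)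
    have hμ : 0 ≤ M (m + 1) / M m := (div_pos (hpos _) (hpos _)).le
    calc M m * (M (m + 1) / M m) ^ (j + 1) = M m * (M (m + 1) / M m) ^ j * (M (m + 1) / M m) := by
          ring
      _ ≤ M (m + j) * (M (m + j + 1) / M (m + j)) := by gcongr; exact (hpos _).le
      _ = M (m + (j + 1)) := by rw [mul_div_cancel₀ _ (hpos _).ne']; rfl

theorem le_mul_ratio_pow_add (k l : ℕ) : M (k + l) ≤ M k * (M (k + l + 1) / M (k + l)) ^ l := by
  induction l with
  | zero => simp
  | succ l ih =>
    have hratio : M (k + l + 1) / M (k + l) ≤ M (k + (l + 1) + 1) / M (k + (l + 1)) :=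
      hmono (Nat.le_succ _)
    have hμ : 0 ≤ M (k + l + 1) / M (k + l) := (div_pos (hpos _) (hpos _)).le
    calc M (k + (l + 1)) = M (k + l + 1) / M (k + l) * M (k + l) := by
          rw [div_mul_cancel₀ _ (hpos _).ne']; rfl
      _ ≤ M (k + l + 1) / M (k + l) * (M k * (M (k + l + 1) / M (k + l)) ^ l) := by gcongr
      _ = M k * (M (k + l + 1) / M (k + l)) ^ (l + 1) := by ring
      _ ≤ M k * (M (k + (l + 1) + 1) / M (k + (l + 1))) ^ (l + 1) := by
          gcongr; exact (hpos _).le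

end MonotoneRatio

theorem weight_sequence_aux_inequality_general (M : ℕ → ℝ)
    (hpos : ∀ k, 0 < M k)
    (hmono : Monotone fun k => M (k + 1) / M k)
    (ρ R : ℝ) (hρ : 1 ≤ ρ) (hR : 1 ≤ R) :
    ∀ j k l : ℕ,
      ρ ^ j * M (k + l) * R ^ l ≤ ρ ^ (j + l) * M k + M (j + k + l) * R ^ (j + l) := by
  intro j k l
  have hup := le_mul_ratio_pow_add hpos hmono k l
  have hlow := mul_ratio_pow_le_add hpos hmono (k + l) j
  set μ := M (k + l + 1) / M (k + l)
  have hμ : 0 ≤ μ := (div_pos (hpos _) (hpos _)).le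
  have hMk := hpos k
  have hMkl := hpos (k + l)
  have hMjkl := hpos (j + k + l)
  rcases le_total (μ * R) ρ with hsmall | hlarge
  · calc ρ ^ j * M (k + l) * R ^ l ≤ ρ ^ j * (M k * μ ^ l * R ^ l) := by
          rw [mul_assoc]; gcongr
      _ = ρ ^ j * (M k * (μ * R) ^ l) := by ring
      _ ≤ ρ ^ j * (M k * ρ ^ l) := by gcongr
      _ = ρ ^ (j + l) * M k := by ring
      _ ≤ ρ ^ (j + l) * M k + M (j + k + l) * R ^ (j + l) := 
          le_add_of_nonneg_right (by positivity)
  · calc ρ ^ j * M (k + l) * R ^ l ≤ (μ * R) ^ j * M (k + l) * R ^ l := by gcongr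
      _ = M (k + l) * μ ^ j * R ^ (j + l) := by ring
      _ ≤ M (j + k + l) * R ^ (j + l) := by
          rw [show j + k + l = k + l + j by omega]; gcongr
      _ ≤ ρ ^ (j + l) * M k + M (j + k + l) * R ^ (j + l) := 
          le_add_of_nonneg_left (by positivity)

theorem weight_sequence_aux_inequality (M : ℕ → ℝ)
    (hpos : ∀ k, 0 < M k) (hM0 : M 0 = 1) (hM1 : 1 ≤ M 1)
    (hmono : Monotone fun k => M (k + 1) / M k)
    (hlim : Filter.Tendsto (fun k => M (k + 1) / M k) Filter.atTop Filter.atTop)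
    (ρ R : ℝ) (hρ : 1 ≤ ρ) (hR : 1 ≤ R) :
    ∀ j k l : ℕ,
      ρ ^ j * M (k + l) * R ^ l ≤ ρ ^ (j + l) * M k + M (j + k + l) * R ^ (j + l) :=
  weight_sequence_aux_inequality_general M hpos hmono ρ R hρ hR
end

section
/- Let T and U be weight sequences and τ > 1. If there is a constant C ≥ 1 such that ω_T(s) ≤ τ^{-1} ω_U(s^τ) + C for all s ≥ 0, then U_k ≤ e^{Cτ} (T_k)^τ for all k ∈ ℕ. -/
noncomputable def assocOmega (M : ℕ → ℝ) (t : ℝ) : ℝ :=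
  if t = 0 then 0 else ⨆ k : ℕ, Real.log (t ^ k / M k)

/-! Take `t = U_{k+1} / U_k`. Log-convexity of `U` makes `k` the index at which `t ^ j / U_j` is
largest, so `ω_U(t) = log (t ^ k / U_k)`, while always `ω_T(s) ≥ log (s ^ k / T_k)`. Evaluating
the hypothesis at `s = t ^ (1/τ)`, the terms `k log t` cancel and what is left is
`log U_k ≤ τ log T_k + C τ`. -/

open Real

section PowDiv

variable {M : ℕ → ℝ} (hpos : ∀ k, 0 < M k)
include hpos

theorem pow_div_le_pow_succ_div {t : ℝ} (ht : 0 ≤ t) {j : ℕ} (hj : M (j + 1) / M j ≤ t) :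
    t ^ j / M j ≤ t ^ (j + 1) / M (j + 1) := by
  rw [div_le_div_iff₀ (hpos j) (hpos _)]
  calc t ^ j * M (j + 1) ≤ t ^ j * (t * M j) :=
        mul_le_mul_of_nonneg_left ((div_le_iff₀ (hpos j)).1 hj) (by positivity)
    _ = t ^ (j + 1) * M j := by ring

theorem pow_succ_div_le_pow_div {t : ℝ} (ht : 0 ≤ t) {j : ℕ} (hj : t ≤ M (j + 1) / M j) :
    t ^ (j + 1) / M (j + 1) ≤ t ^ j / M j := by
  rw [div_le_div_iff₀ (hpos _) (hpos j)]
  calc t ^ (j + 1) * M j = t ^ j * (t * M j) := by ring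
    _ ≤ t ^ j * M (j + 1) :=
        mul_le_mul_of_nonneg_left ((le_div_iff₀ (hpos j)).1 hj) (by positivity)

theorem pow_div_le_of_forall_ratio_le {t : ℝ} (ht : 0 ≤ t) {j k : ℕ} (hjk : j ≤ k)
    (h : ∀ i < k, M (i + 1) / M i ≤ t) : t ^ j / M j ≤ t ^ k / M k := by
  induction k, hjk using Nat.le_induction with
  | base => exact le_rfl
  | succ k _ ih =>
    exact (ih fun i hi => h i (by omega)).trans
      (pow_div_le_pow_succ_div hpos ht (h k k.lt_succ_self))

theorem pow_div_le_of_forall_le_ratio {t : ℝ} (ht : 0 ≤ t) {j k : ℕ} (hkj : k ≤ j)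
    (h : ∀ i, k ≤ i → t ≤ M (i + 1) / M i) : t ^ j / M j ≤ t ^ k / M k := by
  induction j, hkj using Nat.le_induction with
  | base => exact le_rfl
  | succ j hkj ih => exact (pow_succ_div_le_pow_div hpos ht (h j hkj)).trans ih

theorem pow_div_le_of_monotone_ratio (hmono : Monotone fun k => M (k + 1) / M k) (j k : ℕ) :
    (M (k + 1) / M k) ^ j / M j ≤ (M (k + 1) / M k) ^ k / M k := by
  have ht : 0 ≤ M (k + 1) / M k := (div_pos (hpos _) (hpos _)).le
  rcases le_total j k with hjk | hkj
  · exact pow_div_le_of_forall_ratio_le hpos ht hjk fun i hi => hmono hi.le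
  · exact pow_div_le_of_forall_le_ratio hpos ht hkj fun i hi => hmono hi

theorem bddAbove_range_log_pow_div
    (hlim : Filter.Tendsto (fun k => M (k + 1) / M k) Filter.atTop Filter.atTop)
    {t : ℝ} (ht : 0 ≤ t) : BddAbove (Set.range fun j => Real.log (t ^ j / M j)) := by
  obtain ⟨N, hN⟩ := Filter.eventually_atTop.1 (hlim.eventually_ge_atTop t)
  have hnonneg : ∀ j, 0 ≤ t ^ j / M j := fun j => div_nonneg (pow_nonneg ht j) (hpos j).le
  refine ⟨∑ i ∈ Finset.range (N + 1), t ^ i / M i, ?_⟩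
  rintro _ ⟨j, rfl⟩
  have hsingle : ∀ i ≤ N, t ^ i / M i ≤ ∑ i ∈ Finset.range (N + 1), t ^ i / M i := fun i hi =>
    Finset.single_le_sum (fun i _ => hnonneg i) (Finset.mem_range.2 (Nat.lt_succ_of_le hi))
  refine (Real.log_le_self (hnonneg j)).trans ?_
  rcases le_total j N with hjN | hNj
  · exact hsingle j hjN
  · exact (pow_div_le_of_forall_le_ratio hpos ht hNj hN).trans (hsingle N le_rfl)

end PowDiv

theorem log_pow_div_le_assocOmega {M : ℕ → ℝ} (hpos : ∀ k, 0 < M k)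
    (hlim : Filter.Tendsto (fun k => M (k + 1) / M k) Filter.atTop Filter.atTop)
    {t : ℝ} (ht : 0 < t) (k : ℕ) : Real.log (t ^ k / M k) ≤ assocOmega M t := by
  rw [assocOmega, if_neg ht.ne']
  exact le_ciSup (bddAbove_range_log_pow_div hpos hlim ht.le) k

theorem assocOmega_eq_log_pow_div {M : ℕ → ℝ} (hpos : ∀ k, 0 < M k) {t : ℝ} (ht : 0 < t)
    {k : ℕ} (hmax : ∀ j, t ^ j / M j ≤ t ^ k / M k) :
    assocOmega M t = Real.log (t ^ k / M k) := by
  rw [assocOmega, if_neg ht.ne']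
  have hle : ∀ j, Real.log (t ^ j / M j) ≤ Real.log (t ^ k / M k) := fun j =>
    Real.log_le_log (div_pos (pow_pos ht j) (hpos j)) (hmax j)
  exact le_antisymm (ciSup_le hle) (le_ciSup ⟨_, Set.forall_mem_range.2 hle⟩ k)

theorem power_bound_of_omega_bound_general (T U : ℕ → ℝ)
    (hTpos : ∀ k, 0 < T k)
    (hTlim : Filter.Tendsto (fun k => T (k + 1) / T k) Filter.atTop Filter.atTop)
    (hUpos : ∀ k, 0 < U k)
    (hUmono : Monotone fun k => U (k + 1) / U k)
    (τ : ℝ) (hτ : 1 < τ) (C : ℝ)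
    (h : ∀ s : ℝ, 0 ≤ s → assocOmega T s ≤ τ⁻¹ * assocOmega U (s ^ τ) + C) :
    ∀ k : ℕ, U k ≤ Real.exp (C * τ) * T k ^ τ := by
  intro k
  have hτ0 : 0 < τ := one_pos.trans hτ
  set t := U (k + 1) / U k
  have ht : 0 < t := div_pos (hUpos _) (hUpos _)
  have hs : 0 < t ^ τ⁻¹ := rpow_pos_of_pos ht _
  have hst : (t ^ τ⁻¹) ^ τ = t := by
    rw [← rpow_mul ht.le, inv_mul_cancel₀ hτ0.ne', rpow_one]
  have hbound := (log_pow_div_le_assocOmega hTpos hTlim hs k).trans (h _ hs.le)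
  rw [hst, assocOmega_eq_log_pow_div hUpos ht (pow_div_le_of_monotone_ratio hUpos hUmono · k),
    log_div (by positivity) (hTpos k).ne', log_div (by positivity) (hUpos k).ne', log_pow,
    log_pow, log_rpow ht] at hbound
  have hlog : Real.log (U k) ≤ C * τ + τ * Real.log (T k) := by
    have := mul_le_mul_of_nonneg_left hbound hτ0.le
    field_simp at this
    linarith
  calc U k = Real.exp (Real.log (U k)) := (exp_log (hUpos k)).symm
    _ ≤ Real.exp (C * τ + τ * Real.log (T k)) := exp_le_exp.2 hlog
    _ = Real.exp (C * τ) * T k ^ τ := by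
      rw [exp_add, rpow_def_of_pos (hTpos k), mul_comm τ]

theorem power_bound_of_omega_bound (T U : ℕ → ℝ)
    (hTpos : ∀ k, 0 < T k) (hT0 : T 0 = 1) (hT1 : 1 ≤ T 1)
    (hTmono : Monotone fun k => T (k + 1) / T k)
    (hTlim : Filter.Tendsto (fun k => T (k + 1) / T k) Filter.atTop Filter.atTop)
    (hUpos : ∀ k, 0 < U k) (hU0 : U 0 = 1) (hU1 : 1 ≤ U 1)
    (hUmono : Monotone fun k => U (k + 1) / U k)
    (hUlim : Filter.Tendsto (fun k => U (k + 1) / U k) Filter.atTop Filter.atTop)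
    (τ : ℝ) (hτ : 1 < τ) (C : ℝ) (hC : 1 ≤ C)
    (h : ∀ s : ℝ, 0 ≤ s → assocOmega T s ≤ τ⁻¹ * assocOmega U (s ^ τ) + C) :
    ∀ k : ℕ, U k ≤ Real.exp (C * τ) * T k ^ τ :=
  power_bound_of_omega_bound_general T U hTpos hTlim hUpos hUmono τ hτ C h
end

section
/- Let M be a weight sequence and τ > 0, and define γ(M) = sup{γ > 0 : the sequence (μ_k / k^γ)_k is almost increasing} (with γ(M) = 0 if the set is empty, ∞ if unbounded), where μ_k = M_k/M_{k-1}. Then γ(M^τ) = τ · γ(M), where (M^τ)_k = (M_k)^τ. -/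
def AlmostIncreasing (L : ℕ → ℝ) : Prop :=
  ∃ C : ℝ, 0 < C ∧ ∀ j k : ℕ, j ≤ k → L j ≤ C * L k

/-- The Thilliez growth index `γ(M)`, using the quotient sequence `μ_{k+1} = M (k+1) / M k`. -/
noncomputable def gammaIndex (M : ℕ → ℝ) : ENNReal :=
  sSup (ENNReal.ofReal ''
    {γ : ℝ | 0 < γ ∧ AlmostIncreasing fun k => M (k + 1) / M k / ((k : ℝ) + 1) ^ γ})

/-! Raising `M` to the power `τ` raises its quotients to the power `τ`, and
`μ_k ^ τ / (k + 1) ^ γ = (μ_k / (k + 1) ^ (γ / τ)) ^ τ`. Since a positive power of a nonnegative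
sequence is almost increasing exactly when the sequence is (with constant `C ^ τ`), the
admissible exponents of `M ^ τ` are `τ` times those of `M`, and the supremum scales by `τ`. -/

lemma AlmostIncreasing.rpow {L : ℕ → ℝ} (hL : ∀ k, 0 ≤ L k) (h : AlmostIncreasing L)
    {τ : ℝ} (hτ : 0 ≤ τ) : AlmostIncreasing fun k => L k ^ τ := by
  obtain ⟨C, hC, hCL⟩ := h
  refine ⟨C ^ τ, Real.rpow_pos_of_pos hC τ, fun j k hjk => ?_⟩
  rw [← Real.mul_rpow hC.le (hL k)]
  exact Real.rpow_le_rpow (hL j) (hCL j k hjk) hτ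

lemma almostIncreasing_rpow_iff {L : ℕ → ℝ} (hL : ∀ k, 0 ≤ L k) {τ : ℝ} (hτ : 0 < τ) :
    (AlmostIncreasing fun k => L k ^ τ) ↔ AlmostIncreasing L := by
  refine ⟨fun h => ?_, fun h => h.rpow hL hτ.le⟩
  simpa only [Real.rpow_rpow_inv (hL _) hτ.ne'] using
    h.rpow (fun k => Real.rpow_nonneg (hL k) τ) (inv_nonneg.2 hτ.le)

def growthExponents (M : ℕ → ℝ) : Set ℝ :=
  {γ : ℝ | 0 < γ ∧ AlmostIncreasing fun k => M (k + 1) / M k / ((k : ℝ) + 1) ^ γ}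

lemma gammaIndex_eq_sSup_growthExponents (M : ℕ → ℝ) :
    gammaIndex M = sSup (ENNReal.ofReal '' growthExponents M) :=
  rfl

lemma rpow_quotient_div_rpow {M : ℕ → ℝ} (hM : ∀ k, 0 ≤ M k) {τ : ℝ} (hτ : τ ≠ 0)
    (γ : ℝ) (k : ℕ) :
    M (k + 1) ^ τ / M k ^ τ / ((k : ℝ) + 1) ^ γ =
      (M (k + 1) / M k / ((k : ℝ) + 1) ^ (γ / τ)) ^ τ := by
  have hk : (0 : ℝ) ≤ (k : ℝ) + 1 := by positivity
  rw [Real.div_rpow (div_nonneg (hM _) (hM _)) (Real.rpow_nonneg hk _),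
    Real.div_rpow (hM _) (hM _), ← Real.rpow_mul hk, div_mul_cancel₀ γ hτ]

lemma growthExponents_rpow {M : ℕ → ℝ} (hM : ∀ k, 0 ≤ M k) {τ : ℝ} (hτ : 0 < τ) :
    growthExponents (fun k => M k ^ τ) = (τ * ·) '' growthExponents M := by
  have hquot : ∀ (γ : ℝ) (k : ℕ), 0 ≤ M (k + 1) / M k / ((k : ℝ) + 1) ^ γ := fun γ k =>
    div_nonneg (div_nonneg (hM _) (hM _)) (Real.rpow_nonneg (by positivity) _)
  ext γ
  simp only [growthExponents, rpow_quotient_div_rpow hM hτ.ne',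
    almostIncreasing_rpow_iff (hquot _) hτ, Set.mem_ofPred_eq, Set.mem_image]
  constructor
  · rintro ⟨hγ, hai⟩
    exact ⟨γ / τ, ⟨div_pos hγ hτ, hai⟩, mul_div_cancel₀ γ hτ.ne'⟩
  · rintro ⟨x, ⟨hx, hai⟩, rfl⟩
    exact ⟨mul_pos hτ hx, by rwa [mul_div_cancel_left₀ x hτ.ne']⟩

lemma ENNReal.sSup_ofReal_image_mul {τ : ℝ} (hτ : 0 ≤ τ) (S : Set ℝ) :
    sSup (ENNReal.ofReal '' ((τ * ·) '' S)) = ENNReal.ofReal τ * sSup (ENNReal.ofReal '' S) := by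
  simp only [Set.image_image, ENNReal.ofReal_mul hτ, sSup_image, ENNReal.mul_iSup]

theorem gammaIndex_pow_general (M : ℕ → ℝ)
    (hpos : ∀ k, 0 < M k)
    (τ : ℝ) (hτ : 0 < τ) :
    gammaIndex (fun k => M k ^ τ) = ENNReal.ofReal τ * gammaIndex M := by
  rw [gammaIndex_eq_sSup_growthExponents, gammaIndex_eq_sSup_growthExponents,
    growthExponents_rpow (fun k => (hpos k).le) hτ, ENNReal.sSup_ofReal_image_mul hτ.le]

theorem gammaIndex_pow (M : ℕ → ℝ)
    (hpos : ∀ k, 0 < M k) (hM0 : M 0 = 1) (hM1 : 1 ≤ M 1)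
    (hmono : Monotone fun k => M (k + 1) / M k)
    (hlim : Filter.Tendsto (fun k => M (k + 1) / M k) Filter.atTop Filter.atTop)
    (τ : ℝ) (hτ : 0 < τ) :
    gammaIndex (fun k => M k ^ τ) = ENNReal.ofReal τ * gammaIndex M :=
  gammaIndex_pow_general M hpos τ hτ
end

section
/- For the weight sequence N^{q,r} given by N^{q,r}_k = q^{k^r} with q > 1 and r > 1, the condition sup_{k≥1} (N_k/N_{k-1})^{1/k} < ∞ holds if and only if 1 < r ≤ 2. -/
/-!
Writing `N_k / N_{k-1} = q ^ (k ^ r - (k - 1) ^ r)`, the `k`-th root is `q ^ e k` with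
`e k = (k ^ r - (k - 1) ^ r) / k`, so the supremum is finite exactly when `e` is bounded above.
By convexity of `t ↦ t ^ r`, `k ^ r - (k - 1) ^ r` lies between `k ^ (r - 1)` and
`r * k ^ (r - 1)`, so `e k` is comparable to `k ^ (r - 2)`, which is bounded exactly when `r ≤ 2`.
-/

open Filter Real

lemma rpow_sub_one_le_rpow_sub_rpow_sub_one {x r : ℝ} (hx : 1 ≤ x) (hr : 1 ≤ r) :
    x ^ (r - 1) ≤ x ^ r - (x - 1) ^ r := by
  have hsplit (y : ℝ) (hy : 0 ≤ y) : y ^ r = y * y ^ (r - 1) := by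
    rw [← rpow_one_add' hy (by linarith), add_sub_cancel]
  have hmono : (x - 1) ^ (r - 1) ≤ x ^ (r - 1) :=
    rpow_le_rpow (by linarith) (by linarith) (by linarith)
  rw [hsplit x (by linarith), hsplit (x - 1) (by linarith)]
  nlinarith

-- Bernoulli's inequality `(1 - 1/x) ^ r ≥ 1 - r/x`, multiplied by `x ^ r`.
lemma rpow_sub_rpow_sub_one_le {x r : ℝ} (hx : 1 ≤ x) (hr : 1 ≤ r) :
    x ^ r - (x - 1) ^ r ≤ r * x ^ (r - 1) := by
  have hx0 : 0 < x := by linarith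
  have hbernoulli : 1 + r * -x⁻¹ ≤ (1 + -x⁻¹) ^ r :=
    one_add_mul_self_le_rpow_one_add (by linarith [inv_le_one_of_one_le₀ hx]) hr
  have hscale : x ^ r * (1 + -x⁻¹) ^ r = (x - 1) ^ r := by
    rw [← mul_rpow hx0.le (by linarith [inv_le_one_of_one_le₀ hx])]
    congr 1
    field_simp
    ring
  have hpow : x ^ (r - 1) = x ^ r * x⁻¹ := by rw [rpow_sub_one hx0.ne', div_eq_mul_inv]
  rw [hpow, ← hscale]
  nlinarith [rpow_pos_of_pos hx0 r]

lemma rpow_sub_two_le_rpow_sub_rpow_sub_one_div {x r : ℝ} (hx : 1 ≤ x) (hr : 1 ≤ r) :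
    x ^ (r - 2) ≤ (x ^ r - (x - 1) ^ r) / x ∧ (x ^ r - (x - 1) ^ r) / x ≤ r * x ^ (r - 2) := by
  have hx0 : 0 < x := by linarith
  have hpow : x ^ (r - 2) = x ^ (r - 1) / x := by
    rw [← rpow_sub_one hx0.ne']
    ring_nf
  rw [hpow, mul_div_assoc']
  exact ⟨div_le_div_of_nonneg_right (rpow_sub_one_le_rpow_sub_rpow_sub_one hx hr) hx0.le,
    div_le_div_of_nonneg_right (rpow_sub_rpow_sub_one_le hx hr) hx0.le⟩

lemma exists_forall_rpow_le_iff {ι : Type*} {q : ℝ} (hq : 1 < q) (p : ι → Prop) (f : ι → ℝ) :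
    (∃ B, ∀ i, p i → q ^ f i ≤ B) ↔ ∃ C, ∀ i, p i → f i ≤ C := by
  constructor
  · rintro ⟨B, hB⟩
    refine ⟨logb q (max B 1), fun i hi => ?_⟩
    rw [le_logb_iff_rpow_le hq (by positivity)]
    exact (hB i hi).trans (le_max_left B 1)
  · rintro ⟨C, hC⟩
    exact ⟨q ^ C, fun i hi => rpow_le_rpow_of_exponent_le hq.le (hC i hi)⟩

lemma exists_forall_natCast_rpow_le_iff {s : ℝ} :
    (∃ C, ∀ k : ℕ, 1 ≤ k → (k : ℝ) ^ s ≤ C) ↔ s ≤ 0 := by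
  constructor
  · rintro ⟨C, hC⟩
    by_contra! hs
    have hlim := (tendsto_rpow_atTop hs).comp tendsto_natCast_atTop_atTop
    obtain ⟨k, hkC, hk⟩ := ((hlim.eventually_gt_atTop C).and (eventually_ge_atTop 1)).exists
    exact (hC k hk).not_gt hkC
  · intro hs
    exact ⟨1, fun k hk => rpow_le_one_of_one_le_of_nonpos (by exact_mod_cast hk) hs⟩

theorem qkr_derivation_closed_iff (q r : ℝ) (hq : 1 < q) (hr : 1 < r) :
    (∃ B : ℝ, ∀ k : ℕ, 1 ≤ k →
        (q ^ ((k : ℝ) ^ r) / q ^ (((k : ℝ) - 1) ^ r)) ^ ((1 : ℝ) / (k : ℝ)) ≤ B) ↔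
      r ≤ 2 := by
  have hroot (k : ℕ) :
      (q ^ ((k : ℝ) ^ r) / q ^ (((k : ℝ) - 1) ^ r)) ^ ((1 : ℝ) / (k : ℝ)) =
        q ^ (((k : ℝ) ^ r - ((k : ℝ) - 1) ^ r) / k) := by
    rw [← rpow_sub (by linarith), ← rpow_mul (by linarith), mul_one_div]
  have hsandwich (k : ℕ) (hk : 1 ≤ k) :=
    rpow_sub_two_le_rpow_sub_rpow_sub_one_div (x := k) (by exact_mod_cast hk) hr.le
  simp only [hroot]
  rw [exists_forall_rpow_le_iff hq, ← sub_nonpos, ← exists_forall_natCast_rpow_le_iff]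
  constructor
  · rintro ⟨C, hC⟩
    exact ⟨C, fun k hk => (hsandwich k hk).1.trans (hC k hk)⟩
  · rintro ⟨C, hC⟩
    exact ⟨r * C, fun k hk =>
      (hsandwich k hk).2.trans (mul_le_mul_of_nonneg_left (hC k hk) (by linarith))⟩
end

section
/- Let L be a weight sequence, ψ a smooth compactly supported function on ℝ^n satisfying |D^ν ψ(y)| ≤ C_0 h_0^{|ν|} L_{|ν|} for all multi-indices ν and all y, and let 0 < ε < 1, ξ_0 ∈ ℝ^n with |ξ_0| = 1. Define Δ_0^j(x,t) = ψ(t^ε(x - x_0)) and Δ_{k+1}^j(x,t) = D_j Δ_k^j(x,t) + t ξ_{0,j} Δ_k^j(x,t), where D_j = -i ∂/∂x_j. Then for each j ∈ {1,…,n} there exists A_j > 0 (one may take A_j ≥ 2(h_0 + |ξ_{0,j}|)) such that for all k ∈ ℕ, all multi-indices ν, all x and all t ≥ 1: |D_x^ν Δ_k^j(x,t)| ≤ C_0 (h_0 t^ε)^{|ν|} A_j^k ( t^k L_{|ν|} + t^{εk} L_{|ν|+k} ). -/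
/-- The partial derivative `D_j = -i ∂/∂x_j`. -/
noncomputable def partialD {n : ℕ} (j : Fin n) (f : (Fin n → ℝ) → ℂ) : (Fin n → ℝ) → ℂ :=
  fun x => -Complex.I * fderiv ℝ f x (Pi.single j 1)

/-- Iterated multi-index derivative `D^ν`, where the multi-index is recorded as a list of
directions (so `|ν|` is the length of the list). -/
noncomputable def multiD {n : ℕ} : List (Fin n) → ((Fin n → ℝ) → ℂ) → (Fin n → ℝ) → ℂ
  | [], f => f
  | j :: ν, f => partialD j (multiD ν f)



lemma partialD_contDiff {n : ℕ} (j : Fin n) {f : (Fin n → ℝ) → ℂ} (hf : ContDiff ℝ (⊤ : ℕ∞) f) :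
    ContDiff ℝ (⊤ : ℕ∞) (partialD j f) := by
  have h1 : ContDiff ℝ (⊤ : ℕ∞) (fun x => fderiv ℝ f x (Pi.single j 1)) :=
    (hf.fderiv_right (by simp)).clm_apply contDiff_const
  exact contDiff_const.mul h1

lemma multiD_contDiff {n : ℕ} (ν : List (Fin n)) {f : (Fin n → ℝ) → ℂ}
    (hf : ContDiff ℝ (⊤ : ℕ∞) f) : ContDiff ℝ (⊤ : ℕ∞) (multiD ν f) := by
  induction ν with
  | nil => exact hf
  | cons a ν ih => exact partialD_contDiff a ih

lemma multiD_append {n : ℕ} (ν : List (Fin n)) (j : Fin n) (f : (Fin n → ℝ) → ℂ) :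
    multiD (ν ++ [j]) f = multiD ν (partialD j f) := by
  induction ν with
  | nil => rfl
  | cons a ν ih => simp [multiD, ih]

lemma partialD_add {n : ℕ} (j : Fin n) {f g : (Fin n → ℝ) → ℂ}
    (hf : ContDiff ℝ (⊤ : ℕ∞) f) (hg : ContDiff ℝ (⊤ : ℕ∞) g) :
    partialD j (fun y => f y + g y) = fun x => partialD j f x + partialD j g x := by
  funext x
  have hf' : DifferentiableAt ℝ f x := hf.differentiable (by simp) x
  have hg' : DifferentiableAt ℝ g x := hg.differentiable (by simp) x
  simp only [partialD, fderiv_fun_add hf' hg', ContinuousLinearMap.add_apply]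
  ring

lemma partialD_const_mul {n : ℕ} (j : Fin n) {f : (Fin n → ℝ) → ℂ}
    (hf : ContDiff ℝ (⊤ : ℕ∞) f) (c : ℂ) :
    partialD j (fun y => c * f y) = fun x => c * partialD j f x := by
  funext x
  have hf' : DifferentiableAt ℝ f x := hf.differentiable (by simp) x
  simp only [partialD, fderiv_const_mul hf' c, ContinuousLinearMap.smul_apply, smul_eq_mul]
  ring

lemma multiD_add {n : ℕ} (ν : List (Fin n)) {f g : (Fin n → ℝ) → ℂ}
    (hf : ContDiff ℝ (⊤ : ℕ∞) f) (hg : ContDiff ℝ (⊤ : ℕ∞) g) :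
    multiD ν (fun y => f y + g y) = fun x => multiD ν f x + multiD ν g x := by
  induction ν with
  | nil => rfl
  | cons a ν ih =>
    show partialD a (multiD ν fun y => f y + g y) = _
    rw [ih, partialD_add a (multiD_contDiff ν hf) (multiD_contDiff ν hg)]
    rfl

lemma multiD_const_mul {n : ℕ} (ν : List (Fin n)) {f : (Fin n → ℝ) → ℂ}
    (hf : ContDiff ℝ (⊤ : ℕ∞) f) (c : ℂ) :
    multiD ν (fun y => c * f y) = fun x => c * multiD ν f x := by
  induction ν with
  | nil => rfl
  | cons a ν ih =>
    show partialD a (multiD ν fun y => c * f y) = _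
    rw [ih, partialD_const_mul a (multiD_contDiff ν hf) c]
    rfl

lemma partialD_comp_smul {n : ℕ} (j : Fin n) {f : (Fin n → ℝ) → ℂ} (hf : ContDiff ℝ (⊤ : ℕ∞) f)
    (c : ℝ) (x0 : Fin n → ℝ) :
    partialD j (fun y => f (c • (y - x0))) = fun x => (c : ℂ) * partialD j f (c • (x - x0)) := by
  funext x
  have hg : HasFDerivAt (fun y : Fin n → ℝ => c • (y - x0))
      (c • ContinuousLinearMap.id ℝ (Fin n → ℝ)) x :=
    ((hasFDerivAt_id x).sub_const x0).const_smul c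
  have hfd : HasFDerivAt f (fderiv ℝ f (c • (x - x0))) (c • (x - x0)) :=
    (hf.differentiable (by simp) (c • (x - x0))).hasFDerivAt
  have hcomp : HasFDerivAt (fun y => f (c • (y - x0)))
      ((fderiv ℝ f (c • (x - x0))).comp (c • ContinuousLinearMap.id ℝ (Fin n → ℝ))) x :=
    hfd.comp x hg
  simp only [partialD, hcomp.fderiv, ContinuousLinearMap.comp_apply,
    ContinuousLinearMap.smul_apply, ContinuousLinearMap.id_apply, map_smul,
    Complex.real_smul]
  ring

lemma multiD_comp_smul {n : ℕ} (ν : List (Fin n)) {f : (Fin n → ℝ) → ℂ} (hf : ContDiff ℝ (⊤ : ℕ∞) f)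
    (c : ℝ) (x0 : Fin n → ℝ) :
    multiD ν (fun y => f (c • (y - x0)))
      = fun x => (c : ℂ) ^ ν.length * multiD ν f (c • (x - x0)) := by
  induction ν with
  | nil => simp [multiD]
  | cons a ν ih =>
    have hcs : ContDiff ℝ (⊤ : ℕ∞) (fun x : Fin n → ℝ => multiD ν f (c • (x - x0))) :=
      (multiD_contDiff ν hf).comp ((contDiff_id.sub contDiff_const).const_smul c)
    show partialD a (multiD ν fun y => f (c • (y - x0))) = _
    rw [ih, partialD_const_mul a hcs ((c : ℂ) ^ ν.length),
      partialD_comp_smul a (multiD_contDiff ν hf) c x0]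
    funext x
    show (c:ℂ) ^ ν.length * ((c:ℂ) * partialD a (multiD ν f) (c • (x - x0))) = _
    rw [List.length_cons]
    show _ = (c:ℂ) ^ (ν.length + 1) * partialD a (multiD ν f) (c • (x - x0))
    ring

lemma gen_key (L : ℕ → ℝ) (hLpos : ∀ k, 0 < L k)
    (hLmono : Monotone fun k => L (k + 1) / L k)
    (ρ : ℝ) (hρ : 1 ≤ ρ) (p m k : ℕ) (hmk : m ≤ k + 1) :
    ρ ^ (k + 1 - m) * L (p + m) ≤ ρ ^ (k + 1) * L p + L (p + k + 1) := by
  have hρ0 : (0:ℝ) < ρ := lt_of_lt_of_le one_pos hρ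
  have cross : ∀ a b : ℕ, a ≤ b → ρ * L a ≤ L (a + 1) → ρ * L b ≤ L (b + 1) := by
    intro a b hab h
    have h1 : L (a + 1) / L a ≤ L (b + 1) / L b := hLmono hab
    have h2 : ρ ≤ L (a + 1) / L a := (le_div_iff₀ (hLpos a)).2 (by linarith)
    have h3 : ρ ≤ L (b + 1) / L b := le_trans h2 h1
    calc ρ * L b ≤ (L (b + 1) / L b) * L b := by nlinarith [hLpos b]
    _ = L (b + 1) := div_mul_cancel₀ _ (ne_of_gt (hLpos b))
  by_cases hcase : L (p + m) ≤ ρ ^ m * L p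
  · have h5 : ρ ^ (k + 1 - m) * L (p + m) ≤ ρ ^ (k + 1 - m) * (ρ ^ m * L p) :=
      mul_le_mul_of_nonneg_left hcase (pow_nonneg hρ0.le _)
    have he : ρ ^ (k + 1 - m) * ρ ^ m = ρ ^ (k + 1) := by
      rw [← pow_add]; congr 1; omega
    have h6 : ρ ^ (k + 1 - m) * (ρ ^ m * L p) = ρ ^ (k + 1) * L p := by
      rw [← mul_assoc, he]
    linarith [hLpos (p + k + 1)]
  · have aux1 : ∀ m' : ℕ, (∀ i, i < m' → L (p + i + 1) ≤ ρ * L (p + i)) →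
        L (p + m') ≤ ρ ^ m' * L p := by
      intro m'
      induction m' with
      | zero => simp
      | succ m' ih =>
        intro h
        have h1 : L (p + m' + 1) ≤ ρ * L (p + m') := h m' (Nat.lt_succ_self _)
        have h2 := ih (fun i hi => h i (Nat.lt_succ_of_lt hi))
        have : L (p + (m' + 1)) = L (p + m' + 1) := by rw [← Nat.add_assoc]
        rw [this]
        calc L (p + m' + 1) ≤ ρ * L (p + m') := h1
        _ ≤ ρ * (ρ ^ m' * L p) := mul_le_mul_of_nonneg_left h2 hρ0.le
        _ = ρ ^ (m' + 1) * L p := by ring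
    have hex : ∃ i, i < m ∧ ρ * L (p + i) < L (p + i + 1) := by
      by_contra h
      push_neg at h
      exact hcase (aux1 m (fun i hi => h i hi))
    obtain ⟨i, him, hqi⟩ := hex
    have hstep : ∀ s, p + i ≤ s → ρ * L s ≤ L (s + 1) := fun s hs => cross (p + i) s hs hqi.le
    have aux3 : ∀ r : ℕ, ρ ^ r * L (p + m) ≤ L (p + m + r) := by
      intro r
      induction r with
      | zero => simp
      | succ r ih =>
        have h1 : ρ * L (p + m + r) ≤ L (p + m + r + 1) := hstep (p + m + r) (by omega)
        calc ρ ^ (r + 1) * L (p + m) = ρ * (ρ ^ r * L (p + m)) := by ring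
        _ ≤ ρ * L (p + m + r) := mul_le_mul_of_nonneg_left ih hρ0.le
        _ ≤ L (p + m + r + 1) := h1
        _ = L (p + m + (r + 1)) := by rw [← Nat.add_assoc]
    have h4 := aux3 (k + 1 - m)
    have hidx : p + m + (k + 1 - m) = p + k + 1 := by omega
    rw [hidx] at h4
    nlinarith [pow_pos hρ0 (k + 1), hLpos p]

lemma rpow_key1 (L : ℕ → ℝ) (hLpos : ∀ k, 0 < L k)
    (hLmono : Monotone fun k => L (k + 1) / L k)
    (p k : ℕ) (t ε : ℝ) (ht : 1 ≤ t) (hε0 : 0 < ε) (hε1 : ε < 1) :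
    t ^ ε * (t ^ (k : ℝ) * L (p + 1)) ≤
      t ^ ((k : ℝ) + 1) * L p + t ^ (ε * ((k : ℝ) + 1)) * L (p + k + 1) := by
  have t0 : (0:ℝ) < t := lt_of_lt_of_le one_pos ht
  set ρ := t ^ (1 - ε) with hρdef
  have hρ : 1 ≤ ρ := Real.one_le_rpow ht (by linarith)
  have key := gen_key L hLpos hLmono ρ hρ p 1 k (by omega)
  have hsub : k + 1 - 1 = k := by omega
  rw [hsub] at key
  have hmul := mul_le_mul_of_nonneg_left key (Real.rpow_pos_of_pos t0 (ε * ((k : ℝ) + 1))).le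
  have hnp : ∀ (a : ℝ) (m : ℕ), (t ^ a) ^ m = t ^ (a * m) := by
    intro a m
    rw [← Real.rpow_natCast (t ^ a) m, ← Real.rpow_mul t0.le]
  have hadd : ∀ a b : ℝ, t ^ a * t ^ b = t ^ (a + b) := fun a b => (Real.rpow_add t0 a b).symm
  have e1 : t ^ (ε * ((k : ℝ) + 1)) * ρ ^ k = t ^ ε * t ^ (k : ℝ) := by
    rw [hρdef, hnp (1 - ε) k, hadd, hadd]
    congr 1; ring
  have e2 : t ^ (ε * ((k : ℝ) + 1)) * ρ ^ (k + 1) = t ^ ((k : ℝ) + 1) := by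
    rw [hρdef, hnp (1 - ε) (k + 1), hadd]
    congr 1; push_cast; ring
  calc t ^ ε * (t ^ (k : ℝ) * L (p + 1))
      = t ^ (ε * ((k : ℝ) + 1)) * (ρ ^ k * L (p + 1)) := by rw [← mul_assoc, ← e1, mul_assoc]
  _ ≤ t ^ (ε * ((k : ℝ) + 1)) * (ρ ^ (k + 1) * L p + L (p + k + 1)) := hmul
  _ = t ^ ((k : ℝ) + 1) * L p + t ^ (ε * ((k : ℝ) + 1)) * L (p + k + 1) := by
      rw [mul_add, ← mul_assoc, e2]

lemma rpow_key2 (L : ℕ → ℝ) (hLpos : ∀ k, 0 < L k)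
    (hLmono : Monotone fun k => L (k + 1) / L k)
    (p k : ℕ) (t ε : ℝ) (ht : 1 ≤ t) (hε0 : 0 < ε) (hε1 : ε < 1) :
    t * (t ^ (ε * (k : ℝ)) * L (p + k)) ≤
      t ^ ((k : ℝ) + 1) * L p + t ^ (ε * ((k : ℝ) + 1)) * L (p + k + 1) := by
  have t0 : (0:ℝ) < t := lt_of_lt_of_le one_pos ht
  set ρ := t ^ (1 - ε) with hρdef
  have hρ : 1 ≤ ρ := Real.one_le_rpow ht (by linarith)
  have key := gen_key L hLpos hLmono ρ hρ p k k (by omega)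
  have hsub : k + 1 - k = 1 := by omega
  rw [hsub, pow_one] at key
  have hmul := mul_le_mul_of_nonneg_left key (Real.rpow_pos_of_pos t0 (ε * ((k : ℝ) + 1))).le
  have hnp : ∀ (a : ℝ) (m : ℕ), (t ^ a) ^ m = t ^ (a * m) := by
    intro a m
    rw [← Real.rpow_natCast (t ^ a) m, ← Real.rpow_mul t0.le]
  have hadd : ∀ a b : ℝ, t ^ a * t ^ b = t ^ (a + b) := fun a b => (Real.rpow_add t0 a b).symm
  have e1 : t ^ (ε * ((k : ℝ) + 1)) * ρ = t * t ^ (ε * (k : ℝ)) := by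
    rw [hρdef, hadd, show ε * ((k : ℝ) + 1) + (1 - ε) = 1 + ε * k by ring,
      ← hadd 1 (ε * k), Real.rpow_one]
  have e2 : t ^ (ε * ((k : ℝ) + 1)) * ρ ^ (k + 1) = t ^ ((k : ℝ) + 1) := by
    rw [hρdef, hnp (1 - ε) (k + 1), hadd]
    congr 1; push_cast; ring
  calc t * (t ^ (ε * (k : ℝ)) * L (p + k))
      = t ^ (ε * ((k : ℝ) + 1)) * (ρ * L (p + k)) := by rw [← mul_assoc, ← e1, mul_assoc]
  _ ≤ t ^ (ε * ((k : ℝ) + 1)) * (ρ ^ (k + 1) * L p + L (p + k + 1)) := hmul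
  _ = t ^ ((k : ℝ) + 1) * L p + t ^ (ε * ((k : ℝ) + 1)) * L (p + k + 1) := by
      rw [mul_add, ← mul_assoc, e2]

theorem iterates_estimate_for_Dj (n : ℕ) (L : ℕ → ℝ)
    (hLpos : ∀ k, 0 < L k) (hL0 : L 0 = 1) (hL1 : 1 ≤ L 1)
    (hLmono : Monotone fun k => L (k + 1) / L k)
    (C0 h0 : ℝ) (hC0 : 0 < C0) (hh0 : 0 < h0)
    (ψ : (Fin n → ℝ) → ℂ) (hψ : ContDiff ℝ (⊤ : ℕ∞) ψ) (hψc : HasCompactSupport ψ)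
    (hψest : ∀ ν : List (Fin n), ∀ y : Fin n → ℝ,
      ‖multiD ν ψ y‖ ≤ C0 * h0 ^ ν.length * L ν.length)
    (ε : ℝ) (hε0 : 0 < ε) (hε1 : ε < 1)
    (x0 ξ0 : Fin n → ℝ) (hξ0 : Real.sqrt (∑ i, ξ0 i ^ 2) = 1) (j : Fin n)
    (Δ : ℕ → (Fin n → ℝ) → ℝ → ℂ)
    (hΔ0 : ∀ x t, Δ 0 x t = ψ (t ^ ε • (x - x0)))
    (hΔsucc : ∀ k x t,
      Δ (k + 1) x t = partialD j (fun y => Δ k y t) x + (t : ℂ) * (ξ0 j : ℂ) * Δ k x t) :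
    ∃ A : ℝ, 0 < A ∧ ∀ k : ℕ, ∀ ν : List (Fin n), ∀ x : Fin n → ℝ, ∀ t : ℝ, 1 ≤ t →
      ‖multiD ν (fun y => Δ k y t) x‖ ≤
        C0 * (h0 * t ^ ε) ^ ν.length * A ^ k *
          (t ^ k * L ν.length + t ^ (ε * k) * L (ν.length + k)) := by
  have hsm : ∀ (k : ℕ) (t : ℝ), ContDiff ℝ (⊤ : ℕ∞) (fun y => Δ k y t) := by
    intro k
    induction k with
    | zero =>
      intro t
      have hrw : (fun y => Δ 0 y t) = fun y => ψ (t ^ ε • (y - x0)) := funext fun y => hΔ0 y t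
      rw [hrw]
      exact hψ.comp ((contDiff_id.sub contDiff_const).const_smul (t ^ ε))
    | succ k ih =>
      intro t
      have hrw : (fun y => Δ (k + 1) y t)
          = fun y => partialD j (fun z => Δ k z t) y + (t : ℂ) * (ξ0 j : ℂ) * Δ k y t :=
        funext fun y => hΔsucc k y t
      rw [hrw]
      exact (partialD_contDiff j (ih t)).add (contDiff_const.mul (ih t))
  refine ⟨2 * h0 + 2 * |ξ0 j|, by positivity, ?_⟩
  intro k
  induction k with
  | zero =>
    intro ν x t ht
    have t0 : (0:ℝ) < t := lt_of_lt_of_le one_pos ht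
    have hu : (0:ℝ) < t ^ ε := Real.rpow_pos_of_pos t0 ε
    have hrw : (fun y => Δ 0 y t) = fun y => ψ (t ^ ε • (y - x0)) := funext fun y => hΔ0 y t
    rw [hrw, multiD_comp_smul ν hψ (t ^ ε) x0]
    simp only [pow_zero, one_mul, Nat.cast_zero, mul_zero, Real.rpow_zero, Nat.add_zero,
      mul_one]
    rw [norm_mul, norm_pow, Complex.norm_real, Real.norm_eq_abs, abs_of_pos hu]
    have h1 := hψest ν (t ^ ε • (x - x0))
    have h2 : (t ^ ε) ^ ν.length * ‖multiD ν ψ (t ^ ε • (x - x0))‖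
        ≤ (t ^ ε) ^ ν.length * (C0 * h0 ^ ν.length * L ν.length) :=
      mul_le_mul_of_nonneg_left h1 (by positivity)
    have h3 : C0 * (h0 * t ^ ε) ^ ν.length * (L ν.length + L ν.length)
        = (t ^ ε) ^ ν.length * (C0 * h0 ^ ν.length * L ν.length)
          + (t ^ ε) ^ ν.length * (C0 * h0 ^ ν.length * L ν.length) := by
      rw [mul_pow]; ring
    have h4 : (0:ℝ) ≤ (t ^ ε) ^ ν.length * (C0 * h0 ^ ν.length * L ν.length) := by
      have := (hLpos ν.length).le
      positivity
    linarith
  | succ k IH =>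
    intro ν x t ht
    have t0 : (0:ℝ) < t := lt_of_lt_of_le one_pos ht
    have hu : (0:ℝ) < t ^ ε := Real.rpow_pos_of_pos t0 ε
    have hF : ContDiff ℝ (⊤ : ℕ∞) (fun y => Δ k y t) := hsm k t
    have hrw : (fun y => Δ (k + 1) y t)
        = fun y => partialD j (fun z => Δ k z t) y + (t : ℂ) * (ξ0 j : ℂ) * Δ k y t :=
      funext fun y => hΔsucc k y t
    have hsplit : multiD ν (fun y => Δ (k + 1) y t)
        = fun x => multiD (ν ++ [j]) (fun z => Δ k z t) x
          + (t : ℂ) * (ξ0 j : ℂ) * multiD ν (fun z => Δ k z t) x := by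
      rw [hrw, multiD_add ν (partialD_contDiff j hF) (contDiff_const.mul hF),
        ← multiD_append, multiD_const_mul ν hF ((t : ℂ) * (ξ0 j : ℂ))]
    have hsplitx : multiD ν (fun y => Δ (k + 1) y t) x
        = multiD (ν ++ [j]) (fun z => Δ k z t) x
          + (t : ℂ) * (ξ0 j : ℂ) * multiD ν (fun z => Δ k z t) x := by rw [hsplit]
    rw [hsplitx]
    set p := ν.length with hp
    set A := 2 * h0 + 2 * |ξ0 j| with hA
    have hA0 : (0:ℝ) < A := by rw [hA]; positivity
    set X := ‖multiD (ν ++ [j]) (fun z => Δ k z t) x‖ with hX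
    set Y := ‖multiD ν (fun z => Δ k z t) x‖ with hY
    have hnorm : ‖multiD (ν ++ [j]) (fun z => Δ k z t) x
          + (t : ℂ) * (ξ0 j : ℂ) * multiD ν (fun z => Δ k z t) x‖
        ≤ X + (t * |ξ0 j|) * Y := by
      refine le_trans (norm_add_le _ _) ?_
      have hc : ‖(t : ℂ) * (ξ0 j : ℂ)‖ = t * |ξ0 j| := by
        rw [norm_mul, Complex.norm_real, Complex.norm_real, Real.norm_eq_abs,
          Real.norm_eq_abs, abs_of_pos t0]
      rw [norm_mul, hc]
    have IH1 := IH (ν ++ [j]) x t ht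
    have IH2 := IH ν x t ht
    have hlen : (ν ++ [j]).length = p + 1 := by simp [hp]
    rw [hlen] at IH1
    rw [← Real.rpow_natCast t k] at IH1 IH2
    set B := t ^ ((k:ℝ) + 1) * L p + t ^ (ε * ((k:ℝ) + 1)) * L (p + k + 1) with hB
    have hI1 := rpow_key1 L hLpos hLmono p k t ε ht hε0 hε1
    have hI2 := rpow_key2 L hLpos hLmono p k t ε ht hε0 hε1
    have hBnn : (0:ℝ) ≤ t ^ ((k:ℝ) + 1) * L p := by
      have := (hLpos p).le
      positivity
    have hT1 : t ^ ε * (t ^ (ε * (k:ℝ)) * L (p + 1 + k)) ≤ B := by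
      have he : t ^ ε * t ^ (ε * (k:ℝ)) = t ^ (ε * ((k:ℝ) + 1)) := by
        rw [← Real.rpow_add t0]; congr 1; ring
      have hidx : p + 1 + k = p + k + 1 := by omega
      rw [← mul_assoc, he, hidx, hB]
      linarith
    have hT2 : t * (t ^ ((k:ℝ)) * L p) ≤ B := by
      have he : t * t ^ ((k:ℝ)) = t ^ ((k:ℝ) + 1) := by
        nth_rewrite 1 [← Real.rpow_one t]
        rw [← Real.rpow_add t0]; congr 1; ring
      rw [← mul_assoc, he, hB]
      have h5 : (0:ℝ) ≤ t ^ (ε * ((k:ℝ) + 1)) * L (p + k + 1) := by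
        have := (hLpos (p + k + 1)).le
        positivity
      linarith
    -- bound the first term
    have hS1 : t ^ ε * (t ^ ((k:ℝ)) * L (p + 1) + t ^ (ε * (k:ℝ)) * L (p + 1 + k)) ≤ 2 * B := by
      rw [mul_add]
      linarith
    have hc1 : (0:ℝ) ≤ C0 * (h0 * t ^ ε) ^ p * A ^ k * h0 := by positivity
    have hXb : X ≤ (C0 * (h0 * t ^ ε) ^ p * A ^ k * h0) * (2 * B) := by
      refine le_trans IH1 ?_
      have e : C0 * (h0 * t ^ ε) ^ (p + 1) * A ^ k
            * (t ^ ((k:ℝ)) * L (p + 1) + t ^ (ε * (k:ℝ)) * L (p + 1 + k))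
          = (C0 * (h0 * t ^ ε) ^ p * A ^ k * h0)
            * (t ^ ε * (t ^ ((k:ℝ)) * L (p + 1) + t ^ (ε * (k:ℝ)) * L (p + 1 + k))) := by
        rw [pow_succ]; ring
      rw [e]
      exact mul_le_mul_of_nonneg_left hS1 hc1
    -- bound the second term
    have hS2 : t * (t ^ ((k:ℝ)) * L p + t ^ (ε * (k:ℝ)) * L (p + k)) ≤ 2 * B := by
      rw [mul_add]
      linarith
    have hc2 : (0:ℝ) ≤ C0 * (h0 * t ^ ε) ^ p * A ^ k * |ξ0 j| := by positivity
    have hYb : (t * |ξ0 j|) * Y ≤ (C0 * (h0 * t ^ ε) ^ p * A ^ k * |ξ0 j|) * (2 * B) := by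
      have h6 : (t * |ξ0 j|) * Y
          ≤ (t * |ξ0 j|) * (C0 * (h0 * t ^ ε) ^ p * A ^ k
            * (t ^ ((k:ℝ)) * L p + t ^ (ε * (k:ℝ)) * L (p + k))) := by
        refine mul_le_mul_of_nonneg_left IH2 ?_
        positivity
      refine le_trans h6 ?_
      have e : (t * |ξ0 j|) * (C0 * (h0 * t ^ ε) ^ p * A ^ k
            * (t ^ ((k:ℝ)) * L p + t ^ (ε * (k:ℝ)) * L (p + k)))
          = (C0 * (h0 * t ^ ε) ^ p * A ^ k * |ξ0 j|)
            * (t * (t ^ ((k:ℝ)) * L p + t ^ (ε * (k:ℝ)) * L (p + k))) := by ring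
      rw [e]
      exact mul_le_mul_of_nonneg_left hS2 hc2
    -- convert the goal
    have hgidx : p + (k + 1) = p + k + 1 := rfl
    have hgpow : t ^ (k + 1) = t ^ ((k:ℝ) + 1) := by
      rw [← Real.rpow_natCast t (k + 1)]; push_cast; ring_nf
    have hgexp : ε * ((k:ℕ) + 1 : ℕ) = ε * ((k:ℝ) + 1) := by push_cast; ring
    calc ‖multiD (ν ++ [j]) (fun z => Δ k z t) x
          + (t : ℂ) * (ξ0 j : ℂ) * multiD ν (fun z => Δ k z t) x‖
        ≤ X + (t * |ξ0 j|) * Y := hnorm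
    _ ≤ (C0 * (h0 * t ^ ε) ^ p * A ^ k * h0) * (2 * B)
        + (C0 * (h0 * t ^ ε) ^ p * A ^ k * |ξ0 j|) * (2 * B) := add_le_add hXb hYb
    _ = C0 * (h0 * t ^ ε) ^ p * A ^ (k + 1) * B := by
        rw [pow_succ, hA]; ring
    _ = C0 * (h0 * t ^ ε) ^ p * A ^ (k + 1)
        * (t ^ (k + 1) * L p + t ^ (ε * ((k:ℕ) + 1 : ℕ)) * L (p + (k + 1))) := by
        rw [hgidx, hgpow, hgexp, hB]
end

section
/- Let N be a weight sequence with associated weight h_N(t) = inf_k t^k N_k (t > 0), h_N(0) = 0, and let Φ : (0,∞) → ℝ be continuous with 0 < Φ(t) and A_1 h_N(B_1/t) ≤ Φ(t) ≤ A_2 h_N(B_2/t) for constants A_1, A_2, B_1, B_2 > 0 and all t > 0. Then there is a constant Q_1 > 0 such that Q_1^{k+1} N_k ≤ ∫_0^∞ t^k Φ(t) dt for all k ∈ ℕ. -/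
/-!
By log-convexity, the line of slope `log ν` through `(k, log N k)`, where `ν = N (k + 1) / N k`,
supports `j ↦ log N j`; hence `h_N(s) ≥ N k / ν ^ k` whenever `s ν ≥ 1`. On the interval
`[B₁ ν / 2, B₁ ν]` the lower bound for `Φ` therefore gives `t ^ k Φ(t) ≥ A₁ (B₁ / 2) ^ k N k`, and
this interval has length `B₁ ν / 2 ≥ B₁ / 2` because `ν ≥ N 1 / N 0 ≥ 1`. The upper bound for `Φ`
only makes the moments finite: `Φ` is bounded near `0` and `O(t ^ (-(k + 2)))` at infinity.
-/

open MeasureTheory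

open Set

noncomputable def associatedWeight (N : ℕ → ℝ) (t : ℝ) : ℝ := ⨅ k : ℕ, t ^ k * N k

/-- `weightRatio N k` is the paper's `ν_{k+1}`. -/
noncomputable def weightRatio (N : ℕ → ℝ) (k : ℕ) : ℝ := N (k + 1) / N k

section WeightSequence

variable {N : ℕ → ℝ}

theorem associatedWeight_le (hN : ∀ k, 0 ≤ N k) {t : ℝ} (ht : 0 ≤ t) (j : ℕ) :
    associatedWeight N t ≤ t ^ j * N j :=
  ciInf_le ⟨0, by rintro _ ⟨i, rfl⟩; exact mul_nonneg (pow_nonneg ht i) (hN i)⟩ j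

theorem weightRatio_pos (hpos : ∀ k, 0 < N k) (k : ℕ) : 0 < weightRatio N k :=
  div_pos (hpos _) (hpos _)

theorem mul_weightRatio (hpos : ∀ k, 0 < N k) (k : ℕ) : N k * weightRatio N k = N (k + 1) :=
  mul_div_cancel₀ _ (hpos k).ne'

theorem one_le_weightRatio (hpos : ∀ k, 0 < N k) (h01 : N 0 ≤ N 1)
    (hmono : Monotone (weightRatio N)) (k : ℕ) : 1 ≤ weightRatio N k :=
  calc 1 ≤ weightRatio N 0 := (one_le_div (hpos 0)).2 h01
    _ ≤ weightRatio N k := hmono k.zero_le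

theorem mul_weightRatio_pow_le (hpos : ∀ k, 0 < N k) (hmono : Monotone (weightRatio N))
    (k d : ℕ) : N k * weightRatio N k ^ d ≤ N (k + d) := by
  induction d with
  | zero => simp
  | succ d ih =>
    calc N k * weightRatio N k ^ (d + 1) = N k * weightRatio N k ^ d * weightRatio N k := by ring
      _ ≤ N (k + d) * weightRatio N (k + d) :=
        mul_le_mul ih (hmono (k.le_add_right d)) (weightRatio_pos hpos k).le (hpos _).le
      _ = N (k + (d + 1)) := mul_weightRatio hpos _

theorem le_mul_weightRatio_pow (hpos : ∀ k, 0 < N k) (hmono : Monotone (weightRatio N))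
    (j d : ℕ) : N (j + d) ≤ N j * weightRatio N (j + d) ^ d := by
  induction d with
  | zero => simp
  | succ d ih =>
    have hr := weightRatio_pos hpos (j + d)
    calc N (j + (d + 1)) = N (j + d) * weightRatio N (j + d) := (mul_weightRatio hpos _).symm
      _ ≤ N j * weightRatio N (j + d) ^ d * weightRatio N (j + d) :=
        mul_le_mul_of_nonneg_right ih hr.le
      _ = N j * weightRatio N (j + d) ^ (d + 1) := by ring
      _ ≤ N j * weightRatio N (j + (d + 1)) ^ (d + 1) :=
        mul_le_mul_of_nonneg_left (pow_le_pow_left₀ hr.le (hmono (by omega)) _) (hpos j).le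

theorem mul_weightRatio_pow_le_mul_pow (hpos : ∀ k, 0 < N k) (hmono : Monotone (weightRatio N))
    (j k : ℕ) : N k * weightRatio N k ^ j ≤ N j * weightRatio N k ^ k := by
  rcases le_total k j with hkj | hjk
  · obtain ⟨d, rfl⟩ := Nat.exists_eq_add_of_le hkj
    calc N k * weightRatio N k ^ (k + d) = N k * weightRatio N k ^ d * weightRatio N k ^ k := by
          ring
      _ ≤ N (k + d) * weightRatio N k ^ k :=
        mul_le_mul_of_nonneg_right (mul_weightRatio_pow_le hpos hmono k d)
          (pow_nonneg (weightRatio_pos hpos k).le k)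
  · obtain ⟨d, rfl⟩ := Nat.exists_eq_add_of_le hjk
    calc N (j + d) * weightRatio N (j + d) ^ j
        ≤ N j * weightRatio N (j + d) ^ d * weightRatio N (j + d) ^ j :=
          mul_le_mul_of_nonneg_right (le_mul_weightRatio_pow hpos hmono j d)
            (pow_nonneg (weightRatio_pos hpos _).le j)
      _ = N j * weightRatio N (j + d) ^ (j + d) := by ring

theorem div_weightRatio_pow_le_associatedWeight (hpos : ∀ k, 0 < N k)
    (hmono : Monotone (weightRatio N)) {k : ℕ} {s : ℝ}
    (hs : 1 ≤ s * weightRatio N k) : N k / weightRatio N k ^ k ≤ associatedWeight N s := by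
  have hr := weightRatio_pos hpos k
  have hs0 : 0 ≤ s := nonneg_of_mul_nonneg_left (zero_le_one.trans hs) hr
  refine le_ciInf fun j => ?_
  rw [div_le_iff₀ (pow_pos hr k)]
  calc N k ≤ N k * (s * weightRatio N k) ^ j :=
        le_mul_of_one_le_right (hpos k).le (one_le_pow₀ hs)
    _ = s ^ j * (N k * weightRatio N k ^ j) := by ring
    _ ≤ s ^ j * (N j * weightRatio N k ^ k) :=
      mul_le_mul_of_nonneg_left (mul_weightRatio_pow_le_mul_pow hpos hmono j k) (pow_nonneg hs0 j)
    _ = s ^ j * N j * weightRatio N k ^ k := by ring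

theorem le_pow_mul_of_mem_Icc (hpos : ∀ k, 0 < N k)
    (hmono : Monotone (weightRatio N)) {Φ : ℝ → ℝ} {A B : ℝ} (hA : 0 ≤ A) (hB : 0 < B)
    (hlower : ∀ t : ℝ, 0 < t → A * associatedWeight N (B / t) ≤ Φ t) {k : ℕ} {t : ℝ}
    (ht : t ∈ Icc (B * weightRatio N k / 2) (B * weightRatio N k)) :
    A * (B / 2) ^ k * N k ≤ t ^ k * Φ t := by
  have hr := weightRatio_pos hpos k
  have ht0 : 0 < t := lt_of_lt_of_le (by positivity) ht.1
  have hs : 1 ≤ B / t * weightRatio N k := by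
    rw [div_mul_eq_mul_div, one_le_div ht0]; exact ht.2
  calc A * (B / 2) ^ k * N k
        = (B * weightRatio N k / 2) ^ k * (A * (N k / weightRatio N k ^ k)) := by
          field_simp
          ring
    _ ≤ t ^ k * (A * associatedWeight N (B / t)) :=
        mul_le_mul (pow_le_pow_left₀ (by positivity) ht.1 k)
          (mul_le_mul_of_nonneg_left (div_weightRatio_pow_le_associatedWeight hpos hmono hs) hA)
          (mul_nonneg hA (div_nonneg (hpos k).le (pow_nonneg hr.le k))) (pow_nonneg ht0.le k)
    _ ≤ t ^ k * Φ t := mul_le_mul_of_nonneg_left (hlower t ht0) (pow_nonneg ht0.le k)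

end WeightSequence

theorem integrableOn_Ioi_zero_of_bounded_of_le_div_sq {g : ℝ → ℝ} (hg : ContinuousOn g (Ioi 0))
    {M C : ℝ} (h0 : ∀ t ∈ Ioc 0 1, ‖g t‖ ≤ M) (h1 : ∀ t ∈ Ioi 1, ‖g t‖ ≤ C / t ^ 2) :
    IntegrableOn g (Ioi 0) := by
  rw [← Ioc_union_Ioi_eq_Ioi zero_le_one]
  refine IntegrableOn.union ?_ ?_
  · exact .of_bound measure_Ioc_lt_top
      ((hg.mono Ioc_subset_Ioi_self).aestronglyMeasurable measurableSet_Ioc) M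
      ((ae_restrict_iff' measurableSet_Ioc).2 (.of_forall h0))
  · refine ((integrableOn_Ioi_rpow_of_lt (by norm_num : (-2 : ℝ) < -1) one_pos).const_mul C).mono'
      ((hg.mono (Ioi_subset_Ioi zero_le_one)).aestronglyMeasurable measurableSet_Ioi)
      ((ae_restrict_iff' measurableSet_Ioi).2 (.of_forall fun t ht => ?_))
    rw [Real.rpow_neg (zero_le_one.trans ht.le), ← div_eq_mul_inv, Real.rpow_two]
    exact h1 t ht

theorem integrableOn_pow_mul_of_le_associatedWeight {N : ℕ → ℝ} (hN : ∀ k, 0 ≤ N k)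
    {Φ : ℝ → ℝ} (hcont : ContinuousOn Φ (Ioi 0)) (hΦ : ∀ t : ℝ, 0 < t → 0 ≤ Φ t) {A B : ℝ}
    (hA : 0 ≤ A) (hB : 0 ≤ B) (hupper : ∀ t : ℝ, 0 < t → Φ t ≤ A * associatedWeight N (B / t))
    (k : ℕ) : IntegrableOn (fun t => t ^ k * Φ t) (Ioi 0) := by
  have hle (t : ℝ) (ht : 0 < t) (j : ℕ) : ‖t ^ k * Φ t‖ ≤ t ^ k * (A * ((B / t) ^ j * N j)) := by
    rw [Real.norm_of_nonneg (mul_nonneg (pow_nonneg ht.le k) (hΦ t ht))]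
    exact mul_le_mul_of_nonneg_left ((hupper t ht).trans (mul_le_mul_of_nonneg_left
      (associatedWeight_le hN (div_nonneg hB ht.le) j) hA)) (pow_nonneg ht.le k)
  refine integrableOn_Ioi_zero_of_bounded_of_le_div_sq (M := A * N 0)
    (C := A * B ^ (k + 2) * N (k + 2)) ((continuousOn_pow k).mul hcont) (fun t ht => ?_)
    (fun t ht => ?_)
  · calc ‖t ^ k * Φ t‖ ≤ t ^ k * (A * ((B / t) ^ 0 * N 0)) := hle t ht.1 0
      _ ≤ 1 * (A * N 0) := by
        rw [pow_zero, one_mul]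
        exact mul_le_mul_of_nonneg_right (pow_le_one₀ ht.1.le ht.2) (mul_nonneg hA (hN 0))
      _ = A * N 0 := one_mul _
  · have ht0 : (0 : ℝ) < t := zero_lt_one.trans ht
    calc ‖t ^ k * Φ t‖ ≤ t ^ k * (A * ((B / t) ^ (k + 2) * N (k + 2))) := hle t ht0 (k + 2)
      _ = A * B ^ (k + 2) * N (k + 2) / t ^ 2 := by
        rw [div_pow, pow_add t k 2]; field_simp

theorem mul_sub_le_setIntegral_of_le_on_Icc {g : ℝ → ℝ} {s : Set ℝ} (hs : MeasurableSet s)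
    (hg : IntegrableOn g s) (hg0 : ∀ t ∈ s, 0 ≤ g t) {a b c : ℝ} (hab : a ≤ b)
    (hsub : Icc a b ⊆ s) (hc : ∀ t ∈ Icc a b, c ≤ g t) :
    c * (b - a) ≤ ∫ t in s, g t :=
  calc c * (b - a) = volume.real (Icc a b) • c := by
        rw [Real.volume_real_Icc_of_le hab, smul_eq_mul, mul_comm]
    _ ≤ ∫ t in Icc a b, g t :=
        setIntegral_ge_of_const_le measurableSet_Icc measure_Icc_lt_top.ne hc (hg.mono_set hsub)
    _ ≤ ∫ t in s, g t :=
        setIntegral_mono_set hg ((ae_restrict_iff' hs).2 (.of_forall hg0)) hsub.eventuallyLE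

theorem moments_lower_bound_of_optimal_flat_kernel_general (N : ℕ → ℝ)
    (hpos : ∀ k, 0 < N k) (hN0 : N 0 = 1) (hN1 : 1 ≤ N 1)
    (hmono : Monotone fun k => N (k + 1) / N k)
    (Φ : ℝ → ℝ) (hΦcont : ContinuousOn Φ (Set.Ioi 0))
    (A1 A2 B1 B2 : ℝ) (hA1 : 0 < A1) (hA2 : 0 < A2) (hB1 : 0 < B1) (hB2 : 0 < B2)
    (hΦpos : ∀ t : ℝ, 0 < t → 0 < Φ t)
    (hlower : ∀ t : ℝ, 0 < t → A1 * (⨅ k : ℕ, (B1 / t) ^ k * N k) ≤ Φ t)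
    (hupper : ∀ t : ℝ, 0 < t → Φ t ≤ A2 * (⨅ k : ℕ, (B2 / t) ^ k * N k)) :
    ∃ Q1 : ℝ, 0 < Q1 ∧ ∀ k : ℕ,
      Q1 ^ (k + 1) * N k ≤ ∫ t in Set.Ioi (0 : ℝ), t ^ k * Φ t := by
  have hint := integrableOn_pow_mul_of_le_associatedWeight (fun k => (hpos k).le) hΦcont
    (fun t ht => (hΦpos t ht).le) hA2.le hB2.le hupper
  refine ⟨min A1 1 * (B1 / 2), by positivity, fun k => ?_⟩
  have hr : 1 ≤ weightRatio N k := one_le_weightRatio hpos (hN0 ▸ hN1) hmono k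
  have hQ : min A1 1 ^ (k + 1) ≤ A1 :=
    (pow_le_of_le_one (by positivity) (min_le_right _ _) k.succ_ne_zero).trans (min_le_left _ _)
  have hmoment : 0 ≤ (B1 / 2) ^ k * N k * (B1 / 2) := by have := hpos k; positivity
  calc (min A1 1 * (B1 / 2)) ^ (k + 1) * N k
      = min A1 1 ^ (k + 1) * ((B1 / 2) ^ k * N k * (B1 / 2)) := by ring
    _ ≤ A1 * ((B1 / 2) ^ k * N k * (B1 / 2)) := mul_le_mul_of_nonneg_right hQ hmoment
    _ = A1 * (B1 / 2) ^ k * N k * (B1 / 2) := by ring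
    _ ≤ A1 * (B1 / 2) ^ k * N k * (B1 * weightRatio N k - B1 * weightRatio N k / 2) := by
        have := hpos k
        gcongr
        linarith [le_mul_of_one_le_right hB1.le hr]
    _ ≤ ∫ t in Ioi 0, t ^ k * Φ t :=
        mul_sub_le_setIntegral_of_le_on_Icc measurableSet_Ioi (hint k)
          (fun t ht => mul_nonneg (pow_nonneg (le_of_lt ht) k) (hΦpos t ht).le)
          (half_le_self (mul_pos hB1 (zero_lt_one.trans_le hr)).le)
          (fun t ht => lt_of_lt_of_le (by positivity) ht.1)
          (fun t ht => le_pow_mul_of_mem_Icc hpos hmono hA1.le hB1 hlower ht)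

theorem moments_lower_bound_of_optimal_flat_kernel (N : ℕ → ℝ)
    (hpos : ∀ k, 0 < N k) (hN0 : N 0 = 1) (hN1 : 1 ≤ N 1)
    (hmono : Monotone fun k => N (k + 1) / N k)
    (hlim : Filter.Tendsto (fun k => N (k + 1) / N k) Filter.atTop Filter.atTop)
    (Φ : ℝ → ℝ) (hΦcont : ContinuousOn Φ (Set.Ioi 0))
    (A1 A2 B1 B2 : ℝ) (hA1 : 0 < A1) (hA2 : 0 < A2) (hB1 : 0 < B1) (hB2 : 0 < B2)
    (hΦpos : ∀ t : ℝ, 0 < t → 0 < Φ t)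
    (hlower : ∀ t : ℝ, 0 < t → A1 * (⨅ k : ℕ, (B1 / t) ^ k * N k) ≤ Φ t)
    (hupper : ∀ t : ℝ, 0 < t → Φ t ≤ A2 * (⨅ k : ℕ, (B2 / t) ^ k * N k)) :
    ∃ Q1 : ℝ, 0 < Q1 ∧ ∀ k : ℕ,
      Q1 ^ (k + 1) * N k ≤ ∫ t in Set.Ioi (0 : ℝ), t ^ k * Φ t :=
  moments_lower_bound_of_optimal_flat_kernel_general N hpos hN0 hN1 hmono Φ hΦcont A1 A2 B1 B2 hA1
    hA2 hB1 hB2 hΦpos hlower hupper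
end

section
/- Let N be a weight sequence satisfying the derivation-closedness condition sup_{k≥1} (N_k/N_{k-1})^{1/k} < ∞, with associated weight h_N(t) = inf_k t^k N_k, and let Φ : (0,∞) → ℝ satisfy 0 ≤ Φ(t) ≤ A_2 h_N(B_2/t) for constants A_2, B_2 > 0 and all t > 0. Then there exists Q_2 > 0 such that ∫_0^∞ t^k Φ(t) dt ≤ Q_2^{k+1} N_k for all k ∈ ℕ. -/
/-!
Since `h_N(B/t) ≤ (B/t)^j N_j` for every `j`, the `k`-th moment of `Φ` is bounded on `(0, 1]` by
`A B^k N_k` (take `j = k`) and on `(1, ∞)` by `A B^(k+2) N_(k+2) ∫_1^∞ t^(-2) dt` (take `j = k + 2`).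
Derivation closedness gives `N_(k+1) ≤ H^(k+1) N_k`, hence `N_(k+2) ≤ H^(2k+3) N_k`, so both
pieces are geometric in `k` times `N_k`.
-/

open MeasureTheory Set

lemma le_pow_of_rpow_one_div_le {x H : ℝ} {n : ℕ} (hx : 0 ≤ x) (hn : n ≠ 0)
    (h : x ^ ((1 : ℝ) / n) ≤ H) : x ≤ H ^ n := by
  have hH : 0 ≤ H := (Real.rpow_nonneg hx _).trans h
  rw [one_div, Real.rpow_inv_le_iff_of_pos hx hH (by positivity)] at h
  exact_mod_cast h

lemma exists_one_le_forall_succ_le_pow_mul {N : ℕ → ℝ} (hpos : ∀ k, 0 < N k)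
    (hdc : ∃ H : ℝ, ∀ k : ℕ, 1 ≤ k → (N k / N (k - 1)) ^ ((1 : ℝ) / (k : ℝ)) ≤ H) :
    ∃ H : ℝ, 1 ≤ H ∧ ∀ k, N (k + 1) ≤ H ^ (k + 1) * N k := by
  obtain ⟨H, hH⟩ := hdc
  refine ⟨max H 1, le_max_right _ _, fun k => ?_⟩
  have hq : N (k + 1) / N k ≤ max H 1 ^ (k + 1) :=
    le_pow_of_rpow_one_div_le (div_pos (hpos _) (hpos _)).le k.succ_ne_zero
      ((hH (k + 1) (by omega)).trans (le_max_left _ _))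
  rwa [div_le_iff₀ (hpos k)] at hq

lemma le_pow_mul_of_succ_le_pow_mul {N : ℕ → ℝ} {H : ℝ} (hH : 0 ≤ H)
    (hN : ∀ k, N (k + 1) ≤ H ^ (k + 1) * N k) (k : ℕ) :
    N (k + 2) ≤ H ^ (2 * k + 3) * N k :=
  calc N (k + 2) ≤ H ^ (k + 2) * N (k + 1) := hN (k + 1)
    _ ≤ H ^ (k + 2) * (H ^ (k + 1) * N k) := by gcongr; exact hN k
    _ = H ^ (2 * k + 3) * N k := by ring

lemma iInf_pow_mul_le {N : ℕ → ℝ} (hN : ∀ k, 0 ≤ N k) {x : ℝ} (hx : 0 ≤ x) (j : ℕ) :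
    ⨅ k, x ^ k * N k ≤ x ^ j * N j :=
  ciInf_le ⟨0, by rintro _ ⟨i, rfl⟩; exact mul_nonneg (pow_nonneg hx i) (hN i)⟩ j

lemma setIntegral_Ioi_zero_le_add {f : ℝ → ℝ} (hf : AEStronglyMeasurable f volume)
    (hf0 : ∀ t, 0 < t → 0 ≤ f t) {a c : ℝ} (hle : ∀ t ∈ Ioc (0 : ℝ) 1, f t ≤ a)
    (hdecay : ∀ t ∈ Ioi (1 : ℝ), f t ≤ c * t ^ (-2 : ℝ)) :
    ∫ t in Ioi 0, f t ≤ a + c := by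
  have hdom : IntegrableOn (fun t : ℝ => c * t ^ (-2 : ℝ)) (Ioi 1) :=
    (integrableOn_Ioi_rpow_of_lt (by norm_num) one_pos).const_mul c
  have hnorm : ∀ t, 0 < t → ‖f t‖ = f t := fun t ht => Real.norm_of_nonneg (hf0 t ht)
  have hint₁ : IntegrableOn f (Ioc 0 1) :=
    Integrable.mono' (integrableOn_const (by simp)) hf.restrict <|
      (ae_restrict_mem measurableSet_Ioc).mono fun t ht => (hnorm t ht.1).trans_le (hle t ht)
  have hint₂ : IntegrableOn f (Ioi 1) :=
    Integrable.mono' hdom hf.restrict <| (ae_restrict_mem measurableSet_Ioi).mono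
      fun t ht => (hnorm t (one_pos.trans ht)).trans_le (hdecay t ht)
  rw [← Ioc_union_Ioi_eq_Ioi zero_le_one,
    setIntegral_union (Ioc_disjoint_Ioi le_rfl) measurableSet_Ioi hint₁ hint₂]
  gcongr
  · calc ∫ t in Ioc 0 1, f t ≤ ∫ _ in Ioc (0 : ℝ) 1, a :=
          setIntegral_mono_on hint₁ (integrableOn_const (by simp)) measurableSet_Ioc hle
      _ = a := by simp
  · calc ∫ t in Ioi 1, f t ≤ ∫ t in Ioi 1, c * t ^ (-2 : ℝ) :=
          setIntegral_mono_on hint₂ hdom measurableSet_Ioi hdecay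
      _ = c := by
        rw [integral_const_mul, integral_Ioi_rpow_of_lt (by norm_num) one_pos]
        norm_num

lemma add_le_max_pow_succ {A B H : ℝ} (hA : 0 ≤ A) (hB : 0 ≤ B) (hH : 1 ≤ H) (k : ℕ) :
    A * B ^ k + A * B ^ (k + 2) * H ^ (2 * k + 3) ≤
      max (A * (1 + B ^ 2 * H ^ 3)) (B * H ^ 2) ^ (k + 1) := by
  set Q := max (A * (1 + B ^ 2 * H ^ 3)) (B * H ^ 2)
  have hHk : 1 ≤ (H ^ 2) ^ k := one_le_pow₀ (one_le_pow₀ hH)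
  calc A * B ^ k + A * B ^ (k + 2) * H ^ (2 * k + 3)
      ≤ A * B ^ k * (H ^ 2) ^ k + A * B ^ (k + 2) * H ^ (2 * k + 3) := by
        grw [← le_mul_of_one_le_right (by positivity) hHk]
    _ = A * (1 + B ^ 2 * H ^ 3) * (B * H ^ 2) ^ k := by ring
    _ ≤ Q * Q ^ k := by
        gcongr
        · exact le_max_left _ _
        · exact le_max_right _ _
    _ = Q ^ (k + 1) := (pow_succ' _ _).symm

theorem moments_upper_bound_of_optimal_flat_kernel_general (N : ℕ → ℝ)
    (hpos : ∀ k, 0 < N k)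
    (hdc : ∃ H : ℝ, ∀ k : ℕ, 1 ≤ k → (N k / N (k - 1)) ^ ((1 : ℝ) / (k : ℝ)) ≤ H)
    (Φ : ℝ → ℝ) (hΦmeas : Measurable Φ)
    (A2 B2 : ℝ) (hA2 : 0 < A2) (hB2 : 0 < B2)
    (hΦnonneg : ∀ t : ℝ, 0 < t → 0 ≤ Φ t)
    (hupper : ∀ t : ℝ, 0 < t → Φ t ≤ A2 * (⨅ k : ℕ, (B2 / t) ^ k * N k)) :
    ∃ Q2 : ℝ, 0 < Q2 ∧ ∀ k : ℕ,
      (∫ t in Set.Ioi (0 : ℝ), t ^ k * Φ t) ≤ Q2 ^ (k + 1) * N k := by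
  obtain ⟨H, hH1, hH⟩ := exists_one_le_forall_succ_le_pow_mul hpos hdc
  refine ⟨max (A2 * (1 + B2 ^ 2 * H ^ 3)) (B2 * H ^ 2),
    lt_max_of_lt_right (by positivity), fun k => ?_⟩
  have hmoment (t : ℝ) (ht : 0 < t) (j : ℕ) :
      t ^ k * Φ t ≤ t ^ k * (A2 * ((B2 / t) ^ j * N j)) := by
    grw [hupper t ht, iInf_pow_mul_le (fun i => (hpos i).le) (by positivity) j]
  calc ∫ t in Ioi 0, t ^ k * Φ t ≤ A2 * B2 ^ k * N k + A2 * B2 ^ (k + 2) * N (k + 2) := by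
        refine setIntegral_Ioi_zero_le_add
          ((measurable_id.pow_const k).mul hΦmeas).aestronglyMeasurable
          (fun t ht => mul_nonneg (by positivity) (hΦnonneg t ht)) (fun t ht => ?_)
          (fun t ht => ?_)
        · refine (hmoment t ht.1 k).trans_eq ?_
          have := ht.1.ne'
          rw [div_pow]
          field_simp
        · have ht0 : (0 : ℝ) < t := one_pos.trans ht
          refine (hmoment t ht0 (k + 2)).trans_eq ?_
          rw [Real.rpow_neg ht0.le, Real.rpow_two, div_pow]
          field_simp
          ring
    _ ≤ (A2 * B2 ^ k + A2 * B2 ^ (k + 2) * H ^ (2 * k + 3)) * N k := by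
        rw [add_mul, mul_assoc _ (H ^ _)]
        grw [le_pow_mul_of_succ_le_pow_mul (by positivity) hH k]
    _ ≤ _ := mul_le_mul_of_nonneg_right (add_le_max_pow_succ hA2.le hB2.le hH1 k) (hpos k).le

theorem moments_upper_bound_of_optimal_flat_kernel (N : ℕ → ℝ)
    (hpos : ∀ k, 0 < N k) (hN0 : N 0 = 1) (hN1 : 1 ≤ N 1)
    (hmono : Monotone fun k => N (k + 1) / N k)
    (hlim : Filter.Tendsto (fun k => N (k + 1) / N k) Filter.atTop Filter.atTop)
    (hdc : ∃ H : ℝ, ∀ k : ℕ, 1 ≤ k → (N k / N (k - 1)) ^ ((1 : ℝ) / (k : ℝ)) ≤ H)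
    (Φ : ℝ → ℝ) (hΦmeas : Measurable Φ)
    (A2 B2 : ℝ) (hA2 : 0 < A2) (hB2 : 0 < B2)
    (hΦnonneg : ∀ t : ℝ, 0 < t → 0 ≤ Φ t)
    (hupper : ∀ t : ℝ, 0 < t → Φ t ≤ A2 * (⨅ k : ℕ, (B2 / t) ^ k * N k)) :
    ∃ Q2 : ℝ, 0 < Q2 ∧ ∀ k : ℕ,
      (∫ t in Set.Ioi (0 : ℝ), t ^ k * Φ t) ≤ Q2 ^ (k + 1) * N k :=
  moments_upper_bound_of_optimal_flat_kernel_general N hpos hdc Φ hΦmeas A2 B2 hA2 hB2 hΦnonneg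
    hupper
end
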